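/- For the noisy GHZ state ρ(x) = (x/8) I₈ + (1−x)|GHZ⟩⟨GHZ| with |GHZ⟩ = (|000⟩+|111⟩)/√2, if 0 ≤ x < (2−√3)/2 then ‖ρ(x) − ρ(x)^{T₂}‖_tr > √3, and hence by the criterion M(ρ) > √3 (all three bipartition terms being equal by symmetry), ρ(x) is genuinely tripartite entangled. -/

import Mathlib

open Matrix
open scoped ComplexOrder

noncomputable def traceNorm {𝕜 : Type*} [RCLike 𝕜] {m n : Type*} [Fintype m] [Fintype n]
    [DecidableEq n] (B : Matrix m n 𝕜) : ℝ :=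
  RCLike.re ((Matrix.posSemidef_conjTranspose_mul_self B).1.eigenvectorUnitary.1 *
    Matrix.diagonal (((↑) : ℝ → 𝕜) ∘ (Real.sqrt ∘ (Matrix.posSemidef_conjTranspose_mul_self B).1.eigenvalues)) *
    (star (Matrix.posSemidef_conjTranspose_mul_self B).1.eigenvectorUnitary : Matrix n n 𝕜)).trace

abbrev Q3 := Fin 2 × Fin 2 × Fin 2

def ptB (M : Matrix Q3 Q3 ℂ) : Matrix Q3 Q3 ℂ :=
  fun p q => M (p.1, q.2.1, p.2.2) (q.1, p.2.1, q.2.2)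

noncomputable def ghz : Q3 → ℂ :=
  fun v => if v.1 = v.2.1 ∧ v.2.1 = v.2.2 then (1 / Real.sqrt 2 : ℝ) else 0

noncomputable def noisyGHZ (x : ℝ) : Matrix Q3 Q3 ℂ :=
  ((x : ℂ) / 8) • (1 : Matrix Q3 Q3 ℂ) +
    ((1 : ℂ) - x) • Matrix.vecMulVec ghz (star ghz)

def BiseparablePure (ψ : Q3 → ℂ) : Prop :=
  (∃ (u : Fin 2 → ℂ) (v : Fin 2 × Fin 2 → ℂ), ∀ i j k, ψ (i, j, k) = u i * v (j, k)) ∨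
  (∃ (u : Fin 2 → ℂ) (v : Fin 2 × Fin 2 → ℂ), ∀ i j k, ψ (i, j, k) = u j * v (i, k)) ∨
  (∃ (u : Fin 2 → ℂ) (v : Fin 2 × Fin 2 → ℂ), ∀ i j k, ψ (i, j, k) = u k * v (i, j))

/-- A mixed state is biseparable if it is a convex combination of biseparable pure states. -/
def BiseparableMixed (ρ : Matrix Q3 Q3 ℂ) : Prop :=
  ∃ (N : ℕ) (p : Fin N → ℝ) (ψ : Fin N → Q3 → ℂ),
    (∀ α, 0 ≤ p α) ∧ (∑ α, p α = 1) ∧ (∀ α, ∑ v, ‖ψ α v‖ ^ 2 = 1) ∧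
    (∀ α, BiseparablePure (ψ α)) ∧
    ρ = ∑ α, (p α : ℂ) • Matrix.vecMulVec (ψ α) (star (ψ α))

/-!
The partial transpose on the second qubit moves the GHZ coherences `|000⟩⟨111|`, `|111⟩⟨000|` to
`|010⟩⟨101|`, `|101⟩⟨010|` and fixes the noise, so `ρ(x) − ρ(x)^{T₂}` is `(1 − x)/2` times a signed
permutation of four basis vectors. Its absolute value is therefore `|1 − x|/2` times a rank-four
projection, and the trace norm is `2|1 − x|`, which exceeds `√3` exactly when `x < (2 − √3)/2`.

Genuine entanglement is detected by the GHZ fidelity: by Cauchy–Schwarz a normalized pure state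
that factorizes across some bipartition has overlap at most `1/2` with `|GHZ⟩`, hence so does every
convex combination of such states, whereas `⟨GHZ|ρ(x)|GHZ⟩ = 1 − 7x/8 > 1/2`.
-/

open scoped MatrixOrder in
theorem traceNorm_eq_re_trace_of_mul_self_eq {𝕜 : Type*} [RCLike 𝕜] {m n : Type*} [Fintype m]
    [Fintype n] [DecidableEq n] (M : Matrix m n 𝕜) {B : Matrix n n 𝕜} (hB : B.PosSemidef)
    (hBB : B * B = Mᴴ * M) : traceNorm M = RCLike.re B.trace := by
  have hM := posSemidef_conjTranspose_mul_self M
  have hsqrt : CFC.sqrt (Mᴴ * M) = B := CFC.sqrt_unique hBB hB.nonneg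
  rw [CFC.sqrt_eq_real_sqrt _ hM.nonneg, cfcₙ_eq_cfc, hM.1.cfc_eq] at hsqrt
  -- `traceNorm` is `CFC.sqrt (Mᴴ * M)` spelled out through the eigendecomposition
  rw [traceNorm, ← hsqrt]
  rfl

theorem traceNorm_eq_sum_abs_of_conjTranspose_mul_self_eq_diagonal {𝕜 : Type*} [RCLike 𝕜]
    {m n : Type*} [Fintype m] [Fintype n] [DecidableEq n] (M : Matrix m n 𝕜) (s : n → ℝ)
    (h : Mᴴ * M = diagonal fun i => ((s i ^ 2 : ℝ) : 𝕜)) :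
    traceNorm M = ∑ i, |s i| := by
  have hB : (diagonal fun i => ((|s i| : ℝ) : 𝕜)).PosSemidef :=
    posSemidef_diagonal_iff.2 fun i => RCLike.ofReal_nonneg.2 (abs_nonneg _)
  have hBB : (diagonal fun i => ((|s i| : ℝ) : 𝕜)) * diagonal (fun i => ((|s i| : ℝ) : 𝕜)) =
      Mᴴ * M := by
    simp only [diagonal_mul_diagonal, h, ← RCLike.ofReal_mul, abs_mul_abs_self, sq]
  rw [traceNorm_eq_re_trace_of_mul_self_eq M hB hBB, trace_diagonal, map_sum]
  simp only [RCLike.ofReal_re]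

theorem ptB_add (M N : Matrix Q3 Q3 ℂ) : ptB (M + N) = ptB M + ptB N := rfl

theorem ptB_smul (c : ℂ) (M : Matrix Q3 Q3 ℂ) : ptB (c • M) = c • ptB M := rfl

theorem ptB_one : ptB 1 = 1 := by
  ext ⟨i, j, k⟩ ⟨i', j', k'⟩
  simp only [ptB, one_apply, Prod.mk.injEq]
  grind

theorem noisyGHZ_sub_ptB (x : ℝ) :
    noisyGHZ x - ptB (noisyGHZ x) =
      ((1 : ℂ) - x) • (vecMulVec ghz (star ghz) - ptB (vecMulVec ghz (star ghz))) := by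
  rw [noisyGHZ, ptB_add, ptB_smul, ptB_smul, ptB_one, smul_sub]
  abel

theorem vecMulVec_ghz_apply (p q : Q3) :
    vecMulVec ghz (star ghz) p q =
      if (p.1 = p.2.1 ∧ p.2.1 = p.2.2) ∧ (q.1 = q.2.1 ∧ q.2.1 = q.2.2) then 1 / 2 else 0 := by
  have h : ((1 / √2 : ℝ) : ℂ) * ((1 / √2 : ℝ) : ℂ) = 1 / 2 := by
    rw [← Complex.ofReal_mul, div_mul_div_comm, one_mul, Real.mul_self_sqrt zero_le_two]
    norm_num
  simp only [vecMulVec_apply, Pi.star_apply, ghz]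
  split_ifs <;> simp_all [Complex.conj_ofReal]

theorem ghz_sub_ptB_conjTranspose_mul_self :
    (vecMulVec ghz (star ghz) - ptB (vecMulVec ghz (star ghz)))ᴴ *
        (vecMulVec ghz (star ghz) - ptB (vecMulVec ghz (star ghz))) =
      diagonal fun p => if p.1 = p.2.2 then 1 / 4 else 0 := by
  ext ⟨i, j, k⟩ ⟨i', j', k'⟩
  simp only [mul_apply, conjTranspose_apply, Matrix.sub_apply, ptB, vecMulVec_ghz_apply,
    diagonal_apply, Fintype.sum_prod_type, Fin.sum_univ_two]
  fin_cases i <;> fin_cases j <;> fin_cases k <;> fin_cases i' <;> fin_cases j' <;> fin_cases k' <;>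
    norm_num

theorem traceNorm_noisyGHZ_sub_ptB (x : ℝ) :
    traceNorm (noisyGHZ x - ptB (noisyGHZ x)) = 2 * |1 - x| := by
  rw [traceNorm_eq_sum_abs_of_conjTranspose_mul_self_eq_diagonal _
    (fun p => (1 - x) * if p.1 = p.2.2 then 1 / 2 else 0)]
  · simp only [abs_mul, ← Finset.mul_sum, Fintype.sum_prod_type, Fin.sum_univ_two]
    norm_num
    ring
  · rw [noisyGHZ_sub_ptB, conjTranspose_smul, Matrix.smul_mul, Matrix.mul_smul,
      ghz_sub_ptB_conjTranspose_mul_self, smul_smul, ← diagonal_smul]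
    congr 1
    funext p
    simp only [Pi.smul_apply, smul_eq_mul, star_sub, star_one, Complex.star_def,
      Complex.conj_ofReal]
    split_ifs <;> push_cast [Complex.coe_algebraMap] <;> ring

theorem norm_mul_add_mul_sq_le {R : Type*} [SeminormedRing R] (a b c d : R) :
    ‖a * b + c * d‖ ^ 2 ≤ (‖a‖ ^ 2 + ‖c‖ ^ 2) * (‖b‖ ^ 2 + ‖d‖ ^ 2) := by
  have h : ‖a * b + c * d‖ ≤ ‖a‖ * ‖b‖ + ‖c‖ * ‖d‖ :=
    (norm_add_le _ _).trans (add_le_add (norm_mul_le a b) (norm_mul_le c d))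
  calc ‖a * b + c * d‖ ^ 2 ≤ (‖a‖ * ‖b‖ + ‖c‖ * ‖d‖) ^ 2 := by gcongr
    _ ≤ (‖a‖ ^ 2 + ‖c‖ ^ 2) * (‖b‖ ^ 2 + ‖d‖ ^ 2) := by
      nlinarith [sq_nonneg (‖a‖ * ‖d‖ - ‖c‖ * ‖b‖)]

def ghzPair : Finset Q3 := {(0, 0, 0), (1, 1, 1)}

theorem sum_ghzPair (f : Q3 → ℂ) : ∑ p ∈ ghzPair, f p = f (0, 0, 0) + f (1, 1, 1) :=
  Finset.sum_pair (by decide)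

theorem BiseparablePure.norm_sum_ghzPair_sq_le {ψ : Q3 → ℂ} (hψ : BiseparablePure ψ) :
    ‖∑ p ∈ ghzPair, ψ p‖ ^ 2 ≤ ∑ v, ‖ψ v‖ ^ 2 := by
  rw [sum_ghzPair]
  rcases hψ with ⟨u, v, h⟩ | ⟨u, v, h⟩ | ⟨u, v, h⟩ <;>
  · rw [h 0 0 0, h 1 1 1]
    calc _ ≤ (‖u 0‖ ^ 2 + ‖u 1‖ ^ 2) * (‖v (0, 0)‖ ^ 2 + ‖v (1, 1)‖ ^ 2) :=
          norm_mul_add_mul_sq_le _ _ _ _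
      _ ≤ (‖u 0‖ ^ 2 + ‖u 1‖ ^ 2) *
          (‖v (0, 0)‖ ^ 2 + ‖v (0, 1)‖ ^ 2 + ‖v (1, 0)‖ ^ 2 + ‖v (1, 1)‖ ^ 2) := by
        gcongr
        linarith [sq_nonneg ‖v (0, 1)‖, sq_nonneg ‖v (1, 0)‖]
      _ = ∑ v, ‖ψ v‖ ^ 2 := by
        simp only [Fintype.sum_prod_type, Fin.sum_univ_two, h, norm_mul, mul_pow]
        ring

/-- Twice the GHZ fidelity `⟨GHZ|ρ|GHZ⟩`. -/
def ghzWitness (ρ : Matrix Q3 Q3 ℂ) : ℂ := ∑ p ∈ ghzPair, ∑ q ∈ ghzPair, ρ p q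

theorem ghzWitness_vecMulVec_star (ψ : Q3 → ℂ) :
    ghzWitness (vecMulVec ψ (star ψ)) = ((‖∑ p ∈ ghzPair, ψ p‖ ^ 2 : ℝ) : ℂ) := by
  simp only [ghzWitness, vecMulVec_apply, Pi.star_apply, ← Finset.sum_mul_sum, ← star_sum]
  rw [Complex.star_def, Complex.mul_conj', Complex.ofReal_pow]

theorem ghzWitness_sum_smul {ι : Type*} [Fintype ι] (c : ι → ℂ) (M : ι → Matrix Q3 Q3 ℂ) :
    ghzWitness (∑ i, c i • M i) = ∑ i, c i * ghzWitness (M i) := by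
  simp only [ghzWitness, Matrix.sum_apply, Matrix.smul_apply, smul_eq_mul, Finset.mul_sum]
  exact (Finset.sum_congr rfl fun _ _ => Finset.sum_comm).trans Finset.sum_comm

theorem BiseparableMixed.re_ghzWitness_le_one {ρ : Matrix Q3 Q3 ℂ} (hρ : BiseparableMixed ρ) :
    (ghzWitness ρ).re ≤ 1 := by
  obtain ⟨N, p, ψ, hp, hp_sum, hψ_norm, hψ, rfl⟩ := hρ
  rw [ghzWitness_sum_smul]
  simp only [ghzWitness_vecMulVec_star, ← Complex.ofReal_mul, ← Complex.ofReal_sum,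
    Complex.ofReal_re]
  calc ∑ α, p α * ‖∑ v ∈ ghzPair, ψ α v‖ ^ 2 ≤ ∑ α, p α * 1 := by
        gcongr with α
        · exact hp α
        · exact (hψ α).norm_sum_ghzPair_sq_le.trans (hψ_norm α).le
    _ = 1 := by simp [hp_sum]

theorem ghzWitness_noisyGHZ (x : ℝ) : ghzWitness (noisyGHZ x) = ((2 - 7 * x / 4 : ℝ) : ℂ) := by
  simp only [ghzWitness, sum_ghzPair, noisyGHZ, Matrix.add_apply, Matrix.smul_apply, one_apply,
    vecMulVec_ghz_apply, smul_eq_mul]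
  norm_num
  ring

theorem noisyGHZ_GME_general (x : ℝ) (hx : x < (2 - Real.sqrt 3) / 2) :
    Real.sqrt 3 < traceNorm (noisyGHZ x - ptB (noisyGHZ x)) ∧
      ¬ BiseparableMixed (noisyGHZ x) := by
  have hsqrt3 : 1 < √3 := by
    rw [Real.lt_sqrt zero_le_one]
    norm_num
  refine ⟨?_, fun hbisep => ?_⟩
  · rw [traceNorm_noisyGHZ_sub_ptB, abs_of_pos (by linarith)]
    linarith
  · have h := hbisep.re_ghzWitness_le_one
    rw [ghzWitness_noisyGHZ, Complex.ofReal_re] at h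
    linarith

/-- For `0 ≤ x < (2−√3)/2`, the noisy GHZ state has `‖ρ − ρ^{T₂}‖_tr > √3` and is
genuinely tripartite entangled (i.e. not biseparable). -/
theorem noisyGHZ_GME (x : ℝ) (hx0 : 0 ≤ x) (hx : x < (2 - Real.sqrt 3) / 2) :
    Real.sqrt 3 < traceNorm (noisyGHZ x - ptB (noisyGHZ x)) ∧
      ¬ BiseparableMixed (noisyGHZ x) :=
  noisyGHZ_GME_general x hx
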